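/- Let H be a Hopf algebra with bijective antipode S, and α ∈ Aut_Hopf(H). Then the assignment α ↦ ^{α}H, where ^{α}H is H with left coaction h ↦ α(h_{(1)}) ⊗ h_{(2)} and right regular coaction, defines a group homomorphism from Aut_Hopf(H) to the group of isomorphism classes of (H,H)-bi-Galois objects under cotensor product; in particular there is an isomorphism of (H,H)-bicomodule algebras ^{α}H □^H ^{β}H ≅ ^{αβ}H for all α, β ∈ Aut_Hopf(H). -/

import Mathlib

/-!
The map `φ_β : h ↦ β(h₁) ⊗ h₂` is an algebra map because `Δ` and `β ⊗ id` are, and `ε ⊗ id`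
is a retraction of it by counitality. Coassociativity together with `β` being a coalgebra
map gives both colinearity identities; the cotensor condition on `φ_β(h)` is the left
colinearity for `α = id`. Conversely, applying `ε ⊗ id ⊗ id` to the cotensor condition
`x₁ ⊗ x₂ ⊗ y = x ⊗ β(y₁) ⊗ y₂` shows `x = φ_β((ε ⊗ id) x)`, so `φ_β` maps onto the
cotensor product.
-/

open TensorProduct Coalgebra LinearMap

section Twisted

variable {R C D E M N P : Type*} [CommSemiring R]
  [AddCommMonoid C] [Module R C] [AddCommMonoid D] [Module R D] [AddCommMonoid E] [Module R E]
  [AddCommMonoid M] [Module R M] [AddCommMonoid N] [Module R N] [AddCommMonoid P] [Module R P]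

variable (R D M) in
def counitLeft [CoalgebraStruct R D] : D ⊗[R] M →ₗ[R] M :=
  (TensorProduct.lid R M).toLinearMap ∘ₗ rTensor M counit

/-- `h ↦ f(h₁) ⊗ h₂`; for a Hopf automorphism `f` of `H`, the left coaction of `^{f}H`. -/
def twistedComul [CoalgebraStruct R C] (f : C →ₗ[R] D) : C →ₗ[R] D ⊗[R] C :=
  rTensor C f ∘ₗ comul

theorem rTensor_counitLeft_comp_assoc_symm_comp_lTensor [CoalgebraStruct R D]
    (g : M →ₗ[R] N ⊗[R] P) :
    rTensor P (counitLeft R D N) ∘ₗ (TensorProduct.assoc R D N P).symm.toLinearMap ∘ₗ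
        lTensor D g = g ∘ₗ counitLeft R D M := by
  ext d m
  simp only [AlgebraTensorModule.curry_apply, curry_apply, LinearMap.coe_restrictScalars,
    coe_comp, Function.comp_apply, lTensor_tmul, counitLeft, LinearEquiv.coe_coe, rTensor_tmul,
    lid_tmul, map_smul]
  induction g m using TensorProduct.induction_on with
  | zero => simp
  | tmul n p => simp [smul_tmul']
  | add x y hx hy => simp [tmul_add, hx, hy]

theorem counitLeft_comp_comul [Coalgebra R C] : counitLeft R C C ∘ₗ comul = LinearMap.id := by
  ext c
  simp [counitLeft, rTensor_counit_comul]

theorem counitLeft_comp_twistedComul [Coalgebra R C] [Coalgebra R D] (f : C →ₗc[R] D) :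
    counitLeft R D C ∘ₗ twistedComul (f : C →ₗ[R] D) = LinearMap.id := by
  rw [twistedComul, counitLeft, comp_assoc, ← comp_assoc _ _ (rTensor C counit), ← rTensor_comp,
    CoalgHomClass.counit_comp f]
  exact counitLeft_comp_comul

theorem twistedComul_injective [Coalgebra R C] [Coalgebra R D] (f : C →ₗc[R] D) :
    Function.Injective (twistedComul (f : C →ₗ[R] D)) :=
  Function.LeftInverse.injective (g := counitLeft R D C)
    (LinearMap.congr_fun (counitLeft_comp_twistedComul f))

theorem twistedComul_id [Coalgebra R C] : twistedComul (LinearMap.id : C →ₗ[R] C) = comul := by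
  rw [twistedComul, rTensor_id, id_comp]

theorem assoc_symm_comp_lTensor_comul_comp_twistedComul [Coalgebra R C] (f : C →ₗ[R] D) :
    (TensorProduct.assoc R D C C).symm.toLinearMap ∘ₗ lTensor D comul ∘ₗ twistedComul f =
      rTensor C (twistedComul f) ∘ₗ comul := by
  calc (TensorProduct.assoc R D C C).symm.toLinearMap ∘ₗ lTensor D comul ∘ₗ twistedComul f
      = (TensorProduct.assoc R D C C).symm.toLinearMap ∘ₗ (lTensor D comul ∘ₗ rTensor C f) ∘ₗ
          comul := rfl
    _ = ((TensorProduct.assoc R D C C).symm.toLinearMap ∘ₗ rTensor (C ⊗[R] C) f) ∘ₗ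
          lTensor C comul ∘ₗ comul := by
        rw [lTensor_comp_rTensor, ← rTensor_comp_lTensor]; rfl
    _ = (rTensor C (rTensor C f) ∘ₗ (TensorProduct.assoc R C C C).symm.toLinearMap) ∘ₗ
          lTensor C comul ∘ₗ comul := by
        congr 1; ext; rfl
    _ = rTensor C (twistedComul f) ∘ₗ comul := by
        rw [comp_assoc, coassoc_symm, twistedComul, rTensor_comp, comp_assoc]

theorem assoc_comp_rTensor_twistedComul_comp_twistedComul [Coalgebra R C] [Coalgebra R D]
    (a : D →ₗ[R] E) (b : C →ₗc[R] D) :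
    (TensorProduct.assoc R E D C).toLinearMap ∘ₗ rTensor C (twistedComul a) ∘ₗ
        twistedComul (b : C →ₗ[R] D) =
      lTensor E (twistedComul (b : C →ₗ[R] D)) ∘ₗ twistedComul (a ∘ₗ b) := by
  calc (TensorProduct.assoc R E D C).toLinearMap ∘ₗ rTensor C (twistedComul a) ∘ₗ
        twistedComul (b : C →ₗ[R] D)
      = (TensorProduct.assoc R E D C).toLinearMap ∘ₗ
          rTensor C (rTensor D a ∘ₗ comul ∘ₗ (b : C →ₗ[R] D)) ∘ₗ comul := by
        simp only [twistedComul, rTensor_comp, comp_assoc]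
    _ = (TensorProduct.assoc R E D C).toLinearMap ∘ₗ
          rTensor C ((rTensor D a ∘ₗ map (b : C →ₗ[R] D) b) ∘ₗ comul) ∘ₗ comul := by
        rw [← CoalgHomClass.map_comp_comul b]; rfl
    _ = ((TensorProduct.assoc R E D C).toLinearMap ∘ₗ rTensor C (map (a ∘ₗ b) b)) ∘ₗ
          rTensor C comul ∘ₗ comul := by
        rw [rTensor_comp_map, rTensor_comp]; rfl
    _ = map (a ∘ₗ b) (rTensor C b) ∘ₗ (TensorProduct.assoc R C C C).toLinearMap ∘ₗ
          rTensor C comul ∘ₗ comul := by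
        rw [rTensor_def C (map _ _), ← map_map_comp_assoc_eq]; rfl
    _ = (map (a ∘ₗ b) (rTensor C b) ∘ₗ lTensor C comul) ∘ₗ comul := by
        rw [coassoc]; rfl
    _ = lTensor E (twistedComul (b : C →ₗ[R] D)) ∘ₗ twistedComul (a ∘ₗ b) := by
        rw [map_comp_lTensor, twistedComul, twistedComul, ← comp_assoc, lTensor_comp_rTensor]

theorem rTensor_comul_comp_twistedComul [Coalgebra R C] [Coalgebra R D] (b : C →ₗc[R] D) :
    rTensor C comul ∘ₗ twistedComul (b : C →ₗ[R] D) =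
      (TensorProduct.assoc R D D C).symm.toLinearMap ∘ₗ
        lTensor D (twistedComul (b : C →ₗ[R] D)) ∘ₗ twistedComul (b : C →ₗ[R] D) := by
  rw [LinearEquiv.eq_toLinearMap_symm_comp, ← twistedComul_id]
  simpa only [id_comp] using assoc_comp_rTensor_twistedComul_comp_twistedComul LinearMap.id b

theorem apply_counitLeft_eq_of_rTensor_comul_eq [Coalgebra R D] {g : M →ₗ[R] D ⊗[R] M}
    {x : D ⊗[R] M} (hx : rTensor M comul x = (TensorProduct.assoc R D D M).symm (lTensor D g x)) :
    g (counitLeft R D M x) = x :=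
  calc g (counitLeft R D M x)
      = rTensor M (counitLeft R D D) ((TensorProduct.assoc R D D M).symm (lTensor D g x)) :=
        (LinearMap.congr_fun (rTensor_counitLeft_comp_assoc_symm_comp_lTensor g) x).symm
    _ = x := by rw [← hx, ← rTensor_comp_apply, counitLeft_comp_comul, rTensor_id_apply]

theorem range_twistedComul [Coalgebra R C] [Coalgebra R D] (b : C →ₗc[R] D) :
    range (twistedComul (b : C →ₗ[R] D)) = eqLocus (rTensor C comul)
      ((TensorProduct.assoc R D D C).symm.toLinearMap ∘ₗ
        lTensor D (twistedComul (b : C →ₗ[R] D))) := by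
  apply le_antisymm
  · rintro _ ⟨c, rfl⟩
    exact LinearMap.congr_fun (rTensor_comul_comp_twistedComul b) c
  · intro x hx
    exact ⟨counitLeft R D C x, apply_counitLeft_eq_of_rTensor_comul_eq hx⟩

end Twisted

section Bialgebra

variable {R A B : Type*} [CommSemiring R] [Semiring A] [Bialgebra R A] [Semiring B]
  [Algebra R B]

theorem twistedComul_eq_toLinearMap (f : A →ₐ[R] B) :
    twistedComul (f : A →ₗ[R] B) =
      ((Algebra.TensorProduct.map f (AlgHom.id R A)).comp
        (Bialgebra.comulAlgHom R A)).toLinearMap :=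
  rfl

theorem twistedComul_mul (f : A →ₐ[R] B) (x y : A) :
    twistedComul (f : A →ₗ[R] B) (x * y) =
      twistedComul (f : A →ₗ[R] B) x * twistedComul (f : A →ₗ[R] B) y := by
  simp only [twistedComul_eq_toLinearMap, AlgHom.toLinearMap_apply, map_mul]

theorem twistedComul_one (f : A →ₐ[R] B) : twistedComul (f : A →ₗ[R] B) 1 = 1 := by
  simp only [twistedComul_eq_toLinearMap, AlgHom.toLinearMap_apply, map_one]

end Bialgebra

theorem twistedGalois_cotensor_iso
    {k : Type} [CommRing k] {H : Type} [Ring H] [HopfAlgebra k H]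
    (α β : H →ₐc[k] H)
    -- the cotensor product `^{α}H □^H ^{β}H` inside `H ⊗ H`
    (cot : Submodule k (H ⊗[k] H))
    (hcot : cot = LinearMap.ker
      ((LinearMap.rTensor H (comul (R := k) (A := H))) -
        (TensorProduct.assoc k H H H).symm.toLinearMap ∘ₗ
          (LinearMap.lTensor H
            ((TensorProduct.map β.toLinearMap LinearMap.id) ∘ₗ comul (R := k) (A := H))))) :
    -- `φ(h) = β(h₁) ⊗ h₂` is an isomorphism of bicomodule algebras `^{αβ}H ≅ ^{α}H □^H ^{β}H`
    Function.Injective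
      ⇑((TensorProduct.map β.toLinearMap LinearMap.id) ∘ₗ comul (R := k) (A := H)) ∧
    LinearMap.range
      ((TensorProduct.map β.toLinearMap LinearMap.id) ∘ₗ comul (R := k) (A := H)) = cot ∧
    (∀ x y : H,
      ((TensorProduct.map β.toLinearMap LinearMap.id) ∘ₗ comul (R := k) (A := H)) (x * y)
        = ((TensorProduct.map β.toLinearMap LinearMap.id) ∘ₗ comul (R := k) (A := H)) x *
          ((TensorProduct.map β.toLinearMap LinearMap.id) ∘ₗ comul (R := k) (A := H)) y) ∧
    ((TensorProduct.map β.toLinearMap LinearMap.id) ∘ₗ comul (R := k) (A := H)) 1 = 1 ∧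
    -- left colinearity
    (TensorProduct.assoc k H H H).toLinearMap ∘ₗ
        (LinearMap.rTensor H ((TensorProduct.map α.toLinearMap LinearMap.id) ∘ₗ
          comul (R := k) (A := H))) ∘ₗ
        ((TensorProduct.map β.toLinearMap LinearMap.id) ∘ₗ comul (R := k) (A := H))
      = (LinearMap.lTensor H
            ((TensorProduct.map β.toLinearMap LinearMap.id) ∘ₗ comul (R := k) (A := H))) ∘ₗ
        (TensorProduct.map (α.comp β).toLinearMap LinearMap.id) ∘ₗ comul (R := k) (A := H) ∧
    -- right colinearity
    (TensorProduct.assoc k H H H).symm.toLinearMap ∘ₗ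
        (LinearMap.lTensor H (comul (R := k) (A := H))) ∘ₗ
        ((TensorProduct.map β.toLinearMap LinearMap.id) ∘ₗ comul (R := k) (A := H))
      = (LinearMap.rTensor H
            ((TensorProduct.map β.toLinearMap LinearMap.id) ∘ₗ comul (R := k) (A := H))) ∘ₗ
        comul (R := k) (A := H) := by
  subst hcot
  exact ⟨twistedComul_injective (β : H →ₗc[k] H),
    (range_twistedComul (β : H →ₗc[k] H)).trans (eqLocus_eq_ker_sub _ _),
    twistedComul_mul (β : H →ₐ[k] H), twistedComul_one (β : H →ₐ[k] H),
    assoc_comp_rTensor_twistedComul_comp_twistedComul (α : H →ₗ[k] H) (β : H →ₗc[k] H),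
    assoc_symm_comp_lTensor_comul_comp_twistedComul (β : H →ₗ[k] H)⟩
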